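/- arXiv:2010.12442 — 6 statements merged into one kernel-verified Lean document; each statement's English description precedes it below -/
import Mathlib

section
/- The dipole v_{xy}, defined as the unique element of the energy Hilbert space H_E satisfying ⟨v_{xy}, u⟩_{H_E} = u(x) − u(y) for all u ∈ H_E, satisfies the pointwise equation Δ v_{xy} = δ_x − δ_y. -/
/-! Test the representing property against `u = δ_z`, which has finite energy because `z` has
finitely many neighbours: `E(v, δ_z) = δ_z(x) - δ_z(y) = δ_x(z) - δ_y(z)`. In the energy sum only
the pairs `(z, w)` and `(w, z)` contribute, and by symmetry of `c` both give `c_{zw}(v(z) - v(w))`,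
so the factor `1/2` cancels and `E(v, δ_z) = (Δv)(z)`. -/

open scoped BigOperators

/-- Energy form `E(u,v) = (1/2) Σ_{x,y} c_{xy}(u(x)-u(y))(v(x)-v(y))`. -/
noncomputable def energy {V : Type*} (c : V → V → ℝ) (u v : V → ℝ) : ℝ :=
  (1 / 2) * ∑' p : V × V, c p.1 p.2 * (u p.1 - u p.2) * (v p.1 - v p.2)

/-- `u` has finite energy. -/
def FiniteEnergy {V : Type*} (c : V → V → ℝ) (u : V → ℝ) : Prop :=
  Summable fun p : V × V => c p.1 p.2 * (u p.1 - u p.2) * (u p.1 - u p.2)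

/-- Graph Laplacian `(Δu)(x) = Σ_y c_{xy}(u(x)-u(y))`. -/
noncomputable def lap {V : Type*} (c : V → V → ℝ) (u : V → ℝ) (x : V) : ℝ :=
  ∑' y, c x y * (u x - u y)

/-- Total conductance `c(x) = Σ_y c_{xy}`. -/
noncomputable def cTot {V : Type*} (c : V → V → ℝ) (x : V) : ℝ := ∑' y, c x y

/-- Dirac delta at `x`. -/
noncomputable def delta {V : Type*} [DecidableEq V] (x : V) : V → ℝ :=
  fun z => if z = x then 1 else 0

/-- Connectedness: any two vertices are joined by a finite path of positive-conductance edges. -/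
def GraphConnected {V : Type*} (c : V → V → ℝ) : Prop :=
  ∀ x y : V, ∃ (n : ℕ) (p : ℕ → V), p 0 = x ∧ p n = y ∧ ∀ i < n, 0 < c (p i) (p (i + 1))

open Function

section ProdSums

variable {α β M : Type*} [AddCommMonoid M] [TopologicalSpace M]

theorem hasSum_ite_fst_eq [DecidableEq α] {g : β → M} {m : M} (a : α) (hg : HasSum g m) :
    HasSum (fun p : α × β => if p.1 = a then g p.2 else 0) m := by
  refine ((Prod.mk_right_injective a).hasSum_iff ?_).mp (by simpa [Function.comp_def] using hg)
  rintro ⟨a', b⟩ hp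
  have : a' ≠ a := fun h => hp ⟨b, by rw [h]⟩
  simp [this]

theorem hasSum_ite_snd_eq [DecidableEq β] {g : α → M} {m : M} (b : β) (hg : HasSum g m) :
    HasSum (fun p : α × β => if p.2 = b then g p.1 else 0) m := by
  refine ((Prod.mk_left_injective b).hasSum_iff ?_).mp (by simpa [Function.comp_def] using hg)
  rintro ⟨a, b'⟩ hp
  have : b' ≠ b := fun h => hp ⟨a, by rw [h]⟩
  simp [this]

end ProdSums

section Dipole

variable {V : Type*} {c : V → V → ℝ}

theorem summable_mul_of_support_finite {f : V → ℝ} (hf : (support f).Finite) (g : V → ℝ) :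
    Summable fun w => f w * g w :=
  summable_of_hasFiniteSupport (hf.subset (support_mul_subset_left f g))

variable [DecidableEq V]

theorem energy_summand_delta (u : V → ℝ) (z : V) (p : V × V) :
    c p.1 p.2 * (u p.1 - u p.2) * (delta z p.1 - delta z p.2) =
      (if p.1 = z then c z p.2 * (u z - u p.2) else 0) +
        (if p.2 = z then c p.1 z * (u z - u p.1) else 0) := by
  grind [delta]

theorem hasSum_energy_summand_delta {u : V → ℝ} {z : V} {m n : ℝ}
    (hout : HasSum (fun w => c z w * (u z - u w)) m)
    (hin : HasSum (fun w => c w z * (u z - u w)) n) :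
    HasSum (fun p : V × V => c p.1 p.2 * (u p.1 - u p.2) * (delta z p.1 - delta z p.2))
      (m + n) := by
  simp_rw [energy_summand_delta]
  exact (hasSum_ite_fst_eq z hout).add (hasSum_ite_snd_eq z hin)

theorem finiteEnergy_delta (hsym : ∀ x y, c x y = c y x) {z : V} (hloc : (support (c z)).Finite) :
    FiniteEnergy c (delta z) := by
  have hin : (support fun w => c w z).Finite := by simpa only [hsym _ z] using hloc
  exact (hasSum_energy_summand_delta (summable_mul_of_support_finite hloc _).hasSum
    (summable_mul_of_support_finite hin _).hasSum).summable

theorem energy_delta_eq_lap (hsym : ∀ x y, c x y = c y x) {z : V} (hloc : (support (c z)).Finite)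
    (u : V → ℝ) : energy c u (delta z) = lap c u z := by
  have hout := (summable_mul_of_support_finite hloc fun w => u z - u w).hasSum
  have hin : HasSum (fun w => c w z * (u z - u w)) (lap c u z) := by
    simpa only [hsym _ z, lap] using hout
  rw [energy, (hasSum_energy_summand_delta hout hin).tsum_eq, lap]
  ring

end Dipole

theorem dipole_laplacian_general {V : Type*} [DecidableEq V] (c : V → V → ℝ)
    (hsym : ∀ x y, c x y = c y x)
    (hloc : ∀ x, (Function.support (c x)).Finite)
    (x y : V) (v : V → ℝ)
    (hrep : ∀ u : V → ℝ, FiniteEnergy c u → energy c v u = u x - u y) :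
    ∀ z, lap c v z = delta x z - delta y z := by
  intro z
  rw [← energy_delta_eq_lap hsym (hloc z), hrep _ (finiteEnergy_delta hsym (hloc z))]
  simp only [delta, eq_comm]

/-- the dipole `v_{xy}`, characterized by
`⟨v_{xy}, u⟩_{H_E} = u(x) - u(y)` for all finite-energy `u`, satisfies
`Δ v_{xy} = δ_x - δ_y` pointwise. -/
theorem dipole_laplacian {V : Type*} [Countable V] [DecidableEq V] (c : V → V → ℝ)
    (hsym : ∀ x y, c x y = c y x) (hnn : ∀ x y, 0 ≤ c x y)
    (hloop : ∀ x, c x x = 0)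
    (hloc : ∀ x, (Function.support (c x)).Finite)
    (hconn : GraphConnected c)
    (x y : V) (hxy : x ≠ y) (v : V → ℝ) (hv : FiniteEnergy c v)
    (hrep : ∀ u : V → ℝ, FiniteEnergy c u → energy c v u = u x - u y) :
    ∀ z, lap c v z = delta x z - delta y z :=
  dipole_laplacian_general c hsym hloc x y v hrep
end

section
/- For any two distinct vertices x, y in a connected weighted graph and any function u of finite energy, |u(x) − u(y)| ≤ k·‖u‖_{H_E}, where k depends only on x and y (e.g., k² = Σ over a finite path from x to y of the reciprocal conductances along the path). Hence the functional u ↦ u(x) − u(y) is bounded on the energy Hilbert space. -/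
open scoped BigOperators

/-! A single edge `ab` contributes `c_{ab}(u(a)-u(b))²` to the sum `2‖u‖²`, so
`|u(a)-u(b)| ≤ √(2/c_{ab}) ‖u‖`. Telescoping `u(x)-u(y)` along a path of
positive-conductance edges from `x` to `y` and applying this edge by edge gives the bound
with `k = Σᵢ √(2/c_{pᵢpᵢ₊₁})`. -/

section EnergyBounds

variable {V : Type*} {c : V → V → ℝ}

theorem energy_summand_nonneg (hnn : ∀ x y, 0 ≤ c x y) (u : V → ℝ) (q : V × V) :
    0 ≤ c q.1 q.2 * (u q.1 - u q.2) * (u q.1 - u q.2) := by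
  rw [mul_assoc]
  exact mul_nonneg (hnn _ _) (mul_self_nonneg _)

theorem mul_sq_sub_le_two_mul_energy (hnn : ∀ x y, 0 ≤ c x y) {u : V → ℝ}
    (hu : FiniteEnergy c u) (a b : V) : c a b * (u a - u b) ^ 2 ≤ 2 * energy c u u := by
  have h := hu.le_tsum (a, b) fun q _ => energy_summand_nonneg hnn u q
  rw [energy]
  linarith

theorem abs_sub_le_of_conductance_pos (hnn : ∀ x y, 0 ≤ c x y) {u : V → ℝ}
    (hu : FiniteEnergy c u) {a b : V} (hab : 0 < c a b) :
    |u a - u b| ≤ Real.sqrt (2 / c a b) * Real.sqrt (energy c u u) := by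
  have hsq : (u a - u b) ^ 2 ≤ 2 / c a b * energy c u u := by
    rw [div_mul_eq_mul_div, le_div_iff₀ hab, mul_comm]
    exact mul_sq_sub_le_two_mul_energy hnn hu a b
  rw [← Real.sqrt_mul (div_nonneg zero_le_two hab.le)]
  exact Real.abs_le_sqrt hsq

noncomputable def pathConstant (c : V → V → ℝ) (p : ℕ → V) (n : ℕ) : ℝ :=
  ∑ i ∈ Finset.range n, Real.sqrt (2 / c (p i) (p (i + 1)))

theorem pathConstant_pos {p : ℕ → V} {n : ℕ} (hn : n ≠ 0)
    (hpos : ∀ i < n, 0 < c (p i) (p (i + 1))) : 0 < pathConstant c p n :=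
  Finset.sum_pos (fun i hi => Real.sqrt_pos.2 (div_pos two_pos (hpos i (Finset.mem_range.1 hi))))
    (Finset.nonempty_range_iff.2 hn)

theorem abs_sub_le_pathConstant_mul (hnn : ∀ x y, 0 ≤ c x y) {u : V → ℝ}
    (hu : FiniteEnergy c u) {p : ℕ → V} {n : ℕ} (hpos : ∀ i < n, 0 < c (p i) (p (i + 1))) :
    |u (p 0) - u (p n)| ≤ pathConstant c p n * Real.sqrt (energy c u u) := by
  rw [← Finset.sum_range_sub' (fun i => u (p i)), pathConstant, Finset.sum_mul]
  refine (Finset.abs_sum_le_sum_abs _ _).trans (Finset.sum_le_sum fun i hi => ?_)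
  exact abs_sub_le_of_conductance_pos hnn hu (hpos i (Finset.mem_range.1 hi))

end EnergyBounds

theorem difference_functional_bounded_general {V : Type*} (c : V → V → ℝ)
    (hnn : ∀ x y, 0 ≤ c x y)
    (hconn : GraphConnected c)
    (x y : V) (hxy : x ≠ y) :
    ∃ k : ℝ, 0 < k ∧ ∀ u : V → ℝ, FiniteEnergy c u →
      |u x - u y| ≤ k * Real.sqrt (energy c u u) := by
  obtain ⟨n, p, rfl, rfl, hpos⟩ := hconn x y
  have hn : n ≠ 0 := by
    rintro rfl
    exact hxy rfl
  exact ⟨pathConstant c p n, pathConstant_pos hn hpos,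
    fun u hu => abs_sub_le_pathConstant_mul hnn hu hpos⟩

/-- for distinct vertices `x ≠ y`, there is a constant `k`
(depending only on `x, y`) with `|u x - u y| ≤ k * ‖u‖_{H_E}` for every
finite-energy `u`; so the difference functional is bounded on the energy space. -/
theorem difference_functional_bounded {V : Type*} [Countable V] (c : V → V → ℝ)
    (hsym : ∀ x y, c x y = c y x) (hnn : ∀ x y, 0 ≤ c x y)
    (hloop : ∀ x, c x x = 0)
    (hloc : ∀ x, (Function.support (c x)).Finite)
    (hconn : GraphConnected c)
    (x y : V) (hxy : x ≠ y) :
    ∃ k : ℝ, 0 < k ∧ ∀ u : V → ℝ, FiniteEnergy c u →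
      |u x - u y| ≤ k * Real.sqrt (energy c u u) :=
  difference_functional_bounded_general c hnn hconn x y hxy
end

section
/- If h is a harmonic function of finite energy on (G,c), then ‖h‖²_{H_E} = (1/2) Σ_{x∈V} c(x)((P h²)(x) − h²(x)) = −(1/2) Σ_{x∈V} (Δ h²)(x), where h² denotes the pointwise square of h. -/
/-!
Expanding the square, `c_{xy}(h(x) - h(y))² = 2h(x) · c_{xy}(h(x) - h(y)) - c_{xy}(h(x)² - h(y)²)`,
so summing over `y` gives `2h(x)(Δh)(x) - (Δh²)(x)`, which is `-(Δh²)(x)` for harmonic `h`; summing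
over `x` (the energy series converges absolutely) gives the second formula. The first one follows
from the pointwise identity `c(x)((Pu)(x) - u(x)) = -(Δu)(x)`.
-/

open scoped BigOperators

/-- The Markov operator `(Pu)(x) = Σ_y (c_{xy}/c(x)) u(y)`. -/
noncomputable def markovOp {V : Type*} (c : V → V → ℝ) (u : V → ℝ) (x : V) : ℝ :=
  ∑' y, (c x y / cTot c x) * u y

open Function

section LocallyFinite

variable {V : Type*} {c : V → V → ℝ} {x : V}

theorem summable_conductance_mul (hx : (support (c x)).Finite) (g : V → ℝ) :
    Summable fun y => c x y * g y :=
  summable_of_hasFiniteSupport (hx.subset (support_mul_subset_left _ _))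

theorem lap_eq_cTot_mul_sub (hx : (support (c x)).Finite) (u : V → ℝ) :
    lap c u x = cTot c x * u x - ∑' y, c x y * u y := by
  simp only [lap, cTot, mul_sub]
  rw [Summable.tsum_sub (summable_conductance_mul hx _) (summable_conductance_mul hx _),
    tsum_mul_right]

theorem cTot_mul_markovOp (hx : cTot c x ≠ 0) (u : V → ℝ) :
    cTot c x * markovOp c u x = ∑' y, c x y * u y := by
  simp only [markovOp, div_eq_inv_mul, mul_assoc]
  rw [tsum_mul_left, mul_inv_cancel_left₀ hx]

theorem cTot_mul_markovOp_sub (hx : (support (c x)).Finite) (hx₀ : cTot c x ≠ 0) (u : V → ℝ) :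
    cTot c x * (markovOp c u x - u x) = -lap c u x := by
  rw [mul_sub, cTot_mul_markovOp hx₀, lap_eq_cTot_mul_sub hx]
  ring

theorem tsum_conductance_mul_sub_sq (hx : (support (c x)).Finite) (u : V → ℝ) :
    ∑' y, c x y * (u x - u y) * (u x - u y) =
      2 * u x * lap c u x - lap c (fun z => u z ^ 2) x := by
  have expand : ∀ y, c x y * (u x - u y) * (u x - u y) =
      2 * u x * (c x y * (u x - u y)) - c x y * (u x ^ 2 - u y ^ 2) := fun y => by ring
  simp only [expand]
  rw [Summable.tsum_sub ((summable_conductance_mul hx _).mul_left _)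
    (summable_conductance_mul hx _), tsum_mul_left]
  rfl

end LocallyFinite

theorem energy_self_eq_half_tsum {V : Type*} {c : V → V → ℝ}
    (hloc : ∀ x, (support (c x)).Finite) {u : V → ℝ} (hfe : FiniteEnergy c u) :
    energy c u u = (1 / 2) * ∑' x, (2 * u x * lap c u x - lap c (fun z => u z ^ 2) x) := by
  rw [energy, hfe.tsum_prod]
  exact congrArg _ (tsum_congr fun x => tsum_conductance_mul_sub_sq (hloc x) u)

theorem energy_self_of_harmonic {V : Type*} {c : V → V → ℝ}
    (hloc : ∀ x, (support (c x)).Finite) {h : V → ℝ} (hharm : ∀ x, lap c h x = 0)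
    (hfe : FiniteEnergy c h) :
    energy c h h = -(1 / 2) * ∑' x, lap c (fun z => h z ^ 2) x := by
  simp only [energy_self_eq_half_tsum hloc hfe, hharm, mul_zero, zero_sub, tsum_neg]
  ring

theorem harmonic_energy_formulas_general {V : Type*} (c : V → V → ℝ)
    (hloc : ∀ x, (Function.support (c x)).Finite)
    (hpos : ∀ x, 0 < cTot c x)
    (h : V → ℝ) (hharm : ∀ x, lap c h x = 0) (hfe : FiniteEnergy c h) :
    energy c h h = (1 / 2) * ∑' x, cTot c x * (markovOp c (fun z => h z ^ 2) x - h x ^ 2) ∧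
    energy c h h = -(1 / 2) * ∑' x, lap c (fun z => h z ^ 2) x := by
  have hlap := energy_self_of_harmonic hloc hharm hfe
  refine ⟨?_, hlap⟩
  rw [hlap, tsum_congr fun x => cTot_mul_markovOp_sub (hloc x) (hpos x).ne' (fun z => h z ^ 2),
    tsum_neg]
  ring

/-- if `h` is harmonic of finite energy then
`‖h‖²_{H_E} = (1/2) Σ_x c(x)((P h²)(x) - h²(x)) = -(1/2) Σ_x (Δ h²)(x)`. -/
theorem harmonic_energy_formulas {V : Type*} [Countable V] (c : V → V → ℝ)
    (hsym : ∀ x y, c x y = c y x) (hnn : ∀ x y, 0 ≤ c x y)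
    (hloop : ∀ x, c x x = 0)
    (hloc : ∀ x, (Function.support (c x)).Finite)
    (hconn : GraphConnected c)
    (hpos : ∀ x, 0 < cTot c x)
    (h : V → ℝ) (hharm : ∀ x, lap c h x = 0) (hfe : FiniteEnergy c h)
    (hs1 : Summable (fun x => cTot c x * (markovOp c (fun z => h z ^ 2) x - h x ^ 2)))
    (hs2 : Summable (fun x => lap c (fun z => h z ^ 2) x)) :
    energy c h h = (1 / 2) * ∑' x, cTot c x * (markovOp c (fun z => h z ^ 2) x - h x ^ 2) ∧
    energy c h h = -(1 / 2) * ∑' x, lap c (fun z => h z ^ 2) x :=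
  harmonic_energy_formulas_general c hloc hpos h hharm hfe
end

section
/- On the weighted graph with vertex set ℤ, edges between consecutive integers, and conductances c_{n,n+1}, there exists a non-constant harmonic function of finite energy if and only if Σ_{n∈ℤ} 1/c_{n,n+1} < ∞; in that case the space of finite-energy harmonic functions modulo constants is one-dimensional, spanned by u with u(n) − u(n−1) = 1/c_{n−1,n}. -/
open scoped BigOperators

/-! A harmonic function on the weighted line has constant current `c n (u (n + 1) - u n)`, so its
increments are `a / c n` for a single constant `a`. Its energy is then `a² Σ 1 / c n`: it is finite
exactly when `a = 0`, i.e. `u` is constant, or `Σ 1 / c n < ∞`. -/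

open Finset in
theorem exists_forall_add_one_sub_eq {G : Type*} [AddCommGroup G] (f : ℤ → G) :
    ∃ u : ℤ → G, ∀ n, u (n + 1) - u n = f n := by
  refine ⟨fun n => ∑ k ∈ Ico 0 n, f k - ∑ k ∈ Ico n 0, f k, fun n => ?_⟩
  beta_reduce
  rcases le_or_gt 0 n with hn | hn
  · rw [← sum_Ico_add_eq_sum_Ico_add_one hn, Ico_eq_empty (by omega : ¬ n < 0),
      Ico_eq_empty (by omega : ¬ n + 1 < 0)]
    abel
  · rw [← insert_Ico_add_one_left_eq_Ico hn, sum_insert (by simp),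
      Ico_eq_empty (by omega : ¬ (0 : ℤ) < n + 1), Ico_eq_empty (by omega : ¬ (0 : ℤ) < n)]
    abel

theorem Int.eq_apply_zero_of_forall_apply_add_one_eq {α : Type*} {g : ℤ → α}
    (h : ∀ n, g (n + 1) = g n) (n : ℤ) : g n = g 0 := by
  simpa using (show Function.Periodic g 1 from h).int_mul_eq n

namespace IntNetwork

variable {K : Type*}

def IsHarmonic [Ring K] (c u : ℤ → K) : Prop :=
  ∀ n, c (n - 1) * (u n - u (n - 1)) = c n * (u (n + 1) - u n)

theorem IsHarmonic.current_eq [Ring K] {c u : ℤ → K} (hu : IsHarmonic c u) (n : ℤ) :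
    c n * (u (n + 1) - u n) = c 0 * (u 1 - u 0) := by
  refine Int.eq_apply_zero_of_forall_apply_add_one_eq (g := fun n => c n * (u (n + 1) - u n))
    (fun n => ?_) n
  simpa using (hu (n + 1)).symm

section Field

variable [Field K] {c u : ℤ → K}

theorem isHarmonic_iff_exists_sub_eq_mul_inv (hc : ∀ n, c n ≠ 0) :
    IsHarmonic c u ↔ ∃ a, ∀ n, u (n + 1) - u n = a * (c n)⁻¹ := by
  constructor
  · intro hu
    exact ⟨c 0 * (u 1 - u 0), fun n =>
      (eq_mul_inv_iff_mul_eq₀ (hc n)).2 (by rw [mul_comm]; exact hu.current_eq n)⟩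
  · rintro ⟨a, ha⟩ n
    have ha' : u n - u (n - 1) = a * (c (n - 1))⁻¹ := by simpa using ha (n - 1)
    rw [ha', ha n, mul_left_comm, mul_inv_cancel₀ (hc _), mul_left_comm, mul_inv_cancel₀ (hc n)]

theorem exists_apply_ne_iff_ne_zero (hc : ∀ n, c n ≠ 0) {a : K}
    (ha : ∀ n, u (n + 1) - u n = a * (c n)⁻¹) : (∃ m k, u m ≠ u k) ↔ a ≠ 0 := by
  constructor
  · rintro ⟨m, k, hmk⟩ rfl
    have hconst := Int.eq_apply_zero_of_forall_apply_add_one_eq (g := u)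
      (fun n => by simpa [sub_eq_zero] using ha n)
    exact hmk ((hconst m).trans (hconst k).symm)
  · intro ha0
    exact ⟨1, 0, fun h => mul_ne_zero ha0 (inv_ne_zero (hc 0)) (by simpa [h] using (ha 0).symm)⟩

theorem summable_energy_iff [TopologicalSpace K] [IsTopologicalRing K] (hc : ∀ n, c n ≠ 0)
    {a : K} (ha : ∀ n, u (n + 1) - u n = a * (c n)⁻¹) :
    Summable (fun n => c n * (u (n + 1) - u n) ^ 2) ↔ a = 0 ∨ Summable (fun n => (c n)⁻¹) := by
  have hterm : (fun n => c n * (u (n + 1) - u n) ^ 2) = fun n => a ^ 2 * (c n)⁻¹ := by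
    funext n
    rw [ha n]
    field_simp [hc n]
  rw [hterm]
  rcases eq_or_ne a 0 with rfl | ha0
  · simp
  · simp [summable_mul_left_iff (pow_ne_zero 2 ha0), ha0]

end Field

end IntNetwork

open IntNetwork in
/-- on the nearest-neighbor graph on `ℤ` with conductances
`c n` between `n` and `n+1`, a non-constant finite-energy harmonic function
exists iff `Σ 1/c_n < ∞`; in that case harmonic functions mod constants form a
one-dimensional space, spanned by `u` with `u(n) - u(n-1) = 1/c_{n-1,n}`. -/
theorem Z_harmonic_finite_energy (c : ℤ → ℝ) (hc : ∀ n, 0 < c n) :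
    ((∃ u : ℤ → ℝ,
        (∀ n, c (n - 1) * (u n - u (n - 1)) = c n * (u (n + 1) - u n)) ∧
        Summable (fun n : ℤ => c n * (u (n + 1) - u n) ^ 2) ∧
        (∃ m k : ℤ, u m ≠ u k))
      ↔ Summable (fun n : ℤ => (c n)⁻¹)) ∧
    (Summable (fun n : ℤ => (c n)⁻¹) →
      ∀ u : ℤ → ℝ,
        (∀ n, c (n - 1) * (u n - u (n - 1)) = c n * (u (n + 1) - u n)) →
        Summable (fun n : ℤ => c n * (u (n + 1) - u n) ^ 2) →
        ∃ a : ℝ, ∀ n : ℤ, u (n + 1) - u n = a * (c n)⁻¹) := by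
  have hc' : ∀ n, c n ≠ 0 := fun n => (hc n).ne'
  refine ⟨⟨?_, fun hs => ?_⟩, fun _ u hu _ => (isHarmonic_iff_exists_sub_eq_mul_inv hc').1 hu⟩
  · rintro ⟨u, hu, hE, hne⟩
    obtain ⟨a, ha⟩ := (isHarmonic_iff_exists_sub_eq_mul_inv hc').1 hu
    exact ((summable_energy_iff hc' ha).1 hE).resolve_left ((exists_apply_ne_iff_ne_zero hc' ha).1 hne)
  · obtain ⟨u, hu⟩ := exists_forall_add_one_sub_eq fun n => 1 * (c n)⁻¹
    exact ⟨u, (isHarmonic_iff_exists_sub_eq_mul_inv hc').2 ⟨1, hu⟩,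
      (summable_energy_iff hc' hu).2 (Or.inr hs), (exists_apply_ne_iff_ne_zero hc' hu).2 one_ne_zero⟩
end

section
/- On the Pascal graph with all conductances equal to 1, the function h(n,i) = n(n+1)/2 − i(n+1) (with h(0,0) = 0) is a non-constant integer-valued harmonic function satisfying the antisymmetry h(n,i) = −h(n, n−i). -/
/-- The candidate harmonic function on the Pascal graph:
`h(n,i) = n(n+1)/2 - i(n+1)` (an exact integer since `n(n+1)` is even). -/
noncomputable def pascalH (n i : ℕ) : ℤ :=
  ((n : ℤ) * (n + 1)) / 2 - (i : ℤ) * ((n : ℤ) + 1)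

/-! Over `ℚ` the integer division in `h` is exact, so `h` becomes the polynomial
`n(n+1)/2 - i(n+1)`, and every vertex equation as well as the antisymmetry is a polynomial
identity. -/

lemma cast_pascalH (n i : ℕ) : (pascalH n i : ℚ) = n * (n + 1) / 2 - i * (n + 1) := by
  have h2 : (2 : ℤ) ∣ n * (n + 1) := (Int.even_mul_succ_self n).two_dvd
  rw [pascalH, Int.cast_sub, Int.cast_div h2 two_ne_zero]
  push_cast
  ring

lemma pascalH_harmonic_root :
    (pascalH 0 0 - pascalH 1 0) + (pascalH 0 0 - pascalH 1 1) = 0 := by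
  norm_num [pascalH]

lemma pascalH_harmonic_upper (n : ℕ) :
    3 * pascalH (n + 1) 0 - pascalH n 0 - pascalH (n + 2) 0 - pascalH (n + 2) 1 = 0 := by
  rw [← Int.cast_inj (α := ℚ)]
  push_cast [cast_pascalH]
  ring

lemma pascalH_harmonic_lower (n : ℕ) :
    3 * pascalH (n + 1) (n + 1) - pascalH n n - pascalH (n + 2) (n + 1)
      - pascalH (n + 2) (n + 2) = 0 := by
  rw [← Int.cast_inj (α := ℚ)]
  push_cast [cast_pascalH]
  ring

lemma pascalH_harmonic_interior (n i : ℕ) :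
    4 * pascalH (n + 1) (i + 1) - pascalH n i - pascalH n (i + 1)
      - pascalH (n + 2) (i + 1) - pascalH (n + 2) (i + 2) = 0 := by
  rw [← Int.cast_inj (α := ℚ)]
  push_cast [cast_pascalH]
  ring

lemma pascalH_add_self_left (i j : ℕ) : pascalH (i + j) i = -pascalH (i + j) j := by
  rw [← Int.cast_inj (α := ℚ)]
  push_cast [cast_pascalH]
  ring

/-- on the Pascal graph with all conductances `1`, the function
`h(n,i) = n(n+1)/2 - i(n+1)` is a non-constant integer-valued harmonic function
with the antisymmetry `h(n,i) = -h(n, n-i)`.  Harmonicity is expressed by the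
vertex equations at the root, the two boundary rays, and interior vertices. -/
theorem pascal_harmonic :
    -- harmonic at the root (0,0), whose neighbors are (1,0) and (1,1)
    ((pascalH 0 0 - pascalH 1 0) + (pascalH 0 0 - pascalH 1 1) = 0) ∧
    -- harmonic at the upper boundary vertices (n+1, 0)
    (∀ n : ℕ, 3 * pascalH (n + 1) 0
        - pascalH n 0 - pascalH (n + 2) 0 - pascalH (n + 2) 1 = 0) ∧
    -- harmonic at the lower boundary vertices (n+1, n+1)
    (∀ n : ℕ, 3 * pascalH (n + 1) (n + 1)
        - pascalH n n - pascalH (n + 2) (n + 1) - pascalH (n + 2) (n + 2) = 0) ∧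
    -- harmonic at interior vertices (n, i) with 0 < i < n
    (∀ n i : ℕ, 0 < i → i < n →
      4 * pascalH n i - pascalH (n - 1) (i - 1) - pascalH (n - 1) i
        - pascalH (n + 1) i - pascalH (n + 1) (i + 1) = 0) ∧
    -- antisymmetry h(n,i) = -h(n, n-i)
    (∀ n i : ℕ, i ≤ n → pascalH n i = -pascalH n (n - i)) ∧
    -- non-constant
    (pascalH 1 0 ≠ pascalH 1 1) := by
  refine ⟨pascalH_harmonic_root, pascalH_harmonic_upper, pascalH_harmonic_lower, ?_, ?_,
    by norm_num [pascalH]⟩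
  · rintro n i hi hin
    obtain ⟨j, rfl⟩ := Nat.exists_eq_add_of_lt hi
    obtain ⟨m, rfl⟩ := Nat.exists_eq_add_of_lt hin
    simpa [add_assoc, add_comm, add_left_comm] using pascalH_harmonic_interior (j + m + 1) j
  · rintro n i hin
    obtain ⟨j, rfl⟩ := Nat.exists_eq_add_of_le hin
    simpa using pascalH_add_self_left i j
end

section
/- On the weighted stationary Bratteli diagram with d×d invertible symmetric incidence matrix A and conductances c_e = λⁿ for edges in E_n, every harmonic function f = (f_n) satisfies f_{n+1}(x) = f_1(x)·Σ_{i=0}^n λ^{−i} for all x and n ≥ 1 (with f_0 = 0 at the root level). Consequently, if λ > 1, every harmonic function on this diagram is bounded. -/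
/-!
Since `A` is symmetric and invertible, harmonicity at `x ∈ V_{n+1}` says that the vector
`(f_n - f_{n+1}(x)𝟙) + λ (f_{n+2} - f_{n+1}(x)𝟙)` vanishes; its `x`-coordinate is the scalar
recurrence `f_n(x) + λ f_{n+2}(x) = (1 + λ) f_{n+1}(x)`. Hence the increments
`f_{n+1}(x) - f_n(x)` form a geometric sequence of ratio `λ⁻¹` starting from `f_1(x)`, and
`f_{n+1}(x)` is their sum. For `λ > 1` these geometric sums stay below `(1 - λ⁻¹)⁻¹`.
-/

open Finset Matrix

theorem three_term_recurrence_of_harmonic {ι : Type*} [Fintype ι] [DecidableEq ι]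
    {A : Matrix ι ι ℝ} (hAsym : A.IsSymm) (hAinv : IsUnit A.det) {lam : ℝ}
    {f : ℕ → ι → ℝ}
    (hharm : ∀ (n : ℕ) (x : ι),
      Aᵀ *ᵥ (f n - f (n + 1) x • (1 : ι → ℝ))
        + lam • A *ᵥ (f (n + 2) - f (n + 1) x • (1 : ι → ℝ)) = 0)
    (n : ℕ) (x : ι) :
    f n x + lam * f (n + 2) x = (1 + lam) * f (n + 1) x := by
  have hzero : (f n - f (n + 1) x • (1 : ι → ℝ))
      + lam • (f (n + 2) - f (n + 1) x • (1 : ι → ℝ)) = 0 := by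
    refine eq_zero_of_mulVec_eq_zero hAinv.ne_zero ?_
    have h := hharm n x
    rwa [hAsym.eq, ← mulVec_smul, ← mulVec_add] at h
  have hx := congrFun hzero x
  simp only [Pi.add_apply, Pi.sub_apply, Pi.smul_apply, Pi.one_apply, smul_eq_mul, mul_one,
    Pi.zero_apply] at hx
  linarith

section Recurrence

variable {lam : ℝ} {u : ℕ → ℝ}

theorem sub_eq_inv_pow_mul_of_recurrence (hlam : lam ≠ 0)
    (hrec : ∀ n, u n + lam * u (n + 2) = (1 + lam) * u (n + 1)) (n : ℕ) :
    u (n + 1) - u n = lam⁻¹ ^ n * (u 1 - u 0) := by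
  induction n with
  | zero => simp
  | succ n ih =>
    have hstep : u (n + 2) - u (n + 1) = lam⁻¹ * (u (n + 1) - u n) := by
      field_simp
      linarith [hrec n]
    rw [hstep, ih, pow_succ]
    ring

theorem eq_mul_geom_sum_of_recurrence (hlam : lam ≠ 0) (hu0 : u 0 = 0)
    (hrec : ∀ n, u n + lam * u (n + 2) = (1 + lam) * u (n + 1)) (n : ℕ) :
    u n = u 1 * ∑ i ∈ range n, lam⁻¹ ^ i := by
  rw [eq_sum_range_sub u n, hu0, zero_add, mul_sum]
  refine sum_congr rfl fun i _ => ?_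
  rw [sub_eq_inv_pow_mul_of_recurrence hlam hrec i, hu0, sub_zero, mul_comm]

end Recurrence

theorem exists_abs_le_of_eq_mul_geom_sum {ι : Type*} [Fintype ι] {r : ℝ} (hr0 : 0 ≤ r)
    (hr1 : r < 1) {f : ℕ → ι → ℝ} (hf : ∀ n x, f n x = f 1 x * ∑ i ∈ range n, r ^ i) :
    ∃ M : ℝ, ∀ n x, |f n x| ≤ M := by
  refine ⟨(∑ y, |f 1 y|) / (1 - r), fun n x => ?_⟩
  have hsum_nonneg : 0 ≤ ∑ i ∈ range n, r ^ i := sum_nonneg fun i _ => by positivity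
  rw [hf, abs_mul, abs_of_nonneg hsum_nonneg, div_eq_mul_one_div]
  gcongr
  · exact Finset.single_le_sum (fun y _ => abs_nonneg (f 1 y)) (mem_univ x)
  · simpa using geom_sum_Ico_le_of_lt_one (m := 0) (n := n) hr0 hr1

/-- on a stationary weighted Bratteli diagram with `d × d`
invertible symmetric incidence matrix `A` and conductances `λⁿ` on level-`n`
edges, every harmonic function `f = (f_n)` (with `f₀ = 0` at the root level)
satisfies `f_{n+1}(x) = f₁(x) Σ_{i=0}^n λ^{-i}`; consequently, if `λ > 1`,
every harmonic function is bounded. -/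
theorem stationary_bratteli_harmonic {d : ℕ} (A : Matrix (Fin d) (Fin d) ℝ)
    (hAsym : A.IsSymm) (hAinv : IsUnit A.det)
    (lam : ℝ) (hlam : 0 < lam)
    (f : ℕ → Fin d → ℝ) (hf0 : f 0 = 0)
    (hharm : ∀ (n : ℕ) (x : Fin d),
      A.transpose.mulVec (f n - f (n + 1) x • (1 : Fin d → ℝ))
        + lam • A.mulVec (f (n + 2) - f (n + 1) x • (1 : Fin d → ℝ)) = 0) :
    (∀ (n : ℕ) (x : Fin d),
      f (n + 1) x = f 1 x * ∑ i ∈ Finset.range (n + 1), (lam⁻¹) ^ i) ∧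
    (1 < lam → ∃ M : ℝ, ∀ (n : ℕ) (x : Fin d), |f n x| ≤ M) := by
  have hgeom : ∀ n x, f n x = f 1 x * ∑ i ∈ range n, lam⁻¹ ^ i := fun n x =>
    eq_mul_geom_sum_of_recurrence (u := (f · x)) hlam.ne' (congrFun hf0 x)
      (three_term_recurrence_of_harmonic hAsym hAinv hharm · x) n
  exact ⟨fun n x => hgeom (n + 1) x, fun hlam1 =>
    exists_abs_le_of_eq_mul_geom_sum (inv_nonneg.2 hlam.le) (inv_lt_one_of_one_lt₀ hlam1) hgeom⟩
end
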